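/- arXiv:1402.1886 — 2 statements merged into one kernel-verified Lean document; each statement's English description precedes it below -/
import Mathlib

section
/- Let X be a metric space, let g : X -> X be an isometry, and suppose there exist a constant L > 0 and a function W : X -> Z such that |W(x) - W(y)| <= L * d(x, y) for all x, y in X, and W(g^m(x)) = W(x) - m for all x in X and all integers m. Then for any basepoint x_0, the orbit map m -> g^m(x_0) from Z to X is a quasi-isometric embedding; in particular d(x_0, g^m(x_0)) >= |m| / L for all m. -/
/-! The displacement function `W` drops by exactly `|m - m'|` between `gᵐ x₀` and `gᵐ' x₀`, and
it is `L`-Lipschitz, so that distance is at least `|m - m'| / L`. Conversely, since `g` is an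
isometry, the orbit advances by at most `d(x₀, g x₀)` per step, giving a linear upper bound. -/

namespace Equiv.Perm

variable {X : Type*}

theorem isometry_zpow [PseudoEMetricSpace X] {g : Perm X} (hg : Isometry g) (m : ℤ) :
    Isometry ⇑(g ^ m) := by
  have hg_inv : Isometry ⇑g⁻¹ := hg.right_inv g.apply_symm_apply
  induction m using Int.induction_on with
  | zero => exact isometry_id
  | succ n ih => rw [zpow_add_one, coe_mul]; exact ih.comp hg
  | pred n ih => rw [zpow_sub_one, coe_mul]; exact ih.comp hg_inv

variable [PseudoMetricSpace X]

theorem dist_pow_apply_le {g : Perm X} (hg : Isometry g) (x : X) (n : ℕ) :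
    dist x ((g ^ n) x) ≤ n * dist x (g x) := by
  have hstep : ∀ i : ℕ, dist ((g ^ i) x) ((g ^ (i + 1)) x) = dist x (g x) := fun i => by
    rw [pow_succ, coe_mul, Function.comp_apply, ← zpow_natCast, (isometry_zpow hg i).dist_eq]
  simpa [hstep] using dist_le_range_sum_dist (fun i => (g ^ i) x) n

theorem dist_zpow_apply_le {g : Perm X} (hg : Isometry g) (x : X) (m m' : ℤ) :
    dist ((g ^ m) x) ((g ^ m') x) ≤ |(m : ℝ) - m'| * dist x (g x) := by
  wlog hle : m' ≤ m generalizing m m'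
  · rw [dist_comm, abs_sub_comm]; exact this m' m (by omega)
  obtain ⟨n, rfl⟩ : ∃ n : ℕ, m = m' + n := ⟨(m - m').toNat, by omega⟩
  rw [zpow_add, coe_mul, Function.comp_apply, (isometry_zpow hg m').dist_eq, dist_comm,
    zpow_natCast]
  simpa using dist_pow_apply_le hg x n

theorem abs_sub_le_mul_dist_zpow_apply {g : Perm X} {L : ℝ} {W : X → ℤ}
    (hLip : ∀ x y : X, (|W x - W y| : ℝ) ≤ L * dist x y)
    (hW : ∀ (x : X) (m : ℤ), W ((g ^ m) x) = W x - m) (x : X) (m m' : ℤ) :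
    |(m : ℝ) - m'| ≤ L * dist ((g ^ m) x) ((g ^ m') x) := by
  have h := hLip ((g ^ m) x) ((g ^ m') x)
  rw [hW, hW] at h
  push_cast at h
  rw [abs_sub_comm]
  convert h using 2
  ring

end Equiv.Perm

theorem exists_quasiIsometric_of_linear_bounds {X : Type*} [PseudoMetricSpace X] (f : ℤ → X)
    {L c : ℝ} (hlow : ∀ m m' : ℤ, |(m : ℝ) - m'| ≤ L * dist (f m) (f m'))
    (hup : ∀ m m' : ℤ, dist (f m) (f m') ≤ |(m : ℝ) - m'| * c) :
    ∃ A B : ℝ, 1 ≤ A ∧ 0 ≤ B ∧ ∀ m m' : ℤ,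
      (1 / A) * (|m - m'| : ℤ) - B ≤ dist (f m) (f m') ∧
      dist (f m) (f m') ≤ A * (|m - m'| : ℤ) + B := by
  set A := max (max L c) 1
  have hA1 : 1 ≤ A := le_max_right _ _
  have hLA : L ≤ A := (le_max_left _ _).trans (le_max_left _ _)
  have hcA : c ≤ A := (le_max_right _ _).trans (le_max_left _ _)
  refine ⟨A, 0, hA1, le_rfl, fun m m' => ⟨?_, ?_⟩⟩
  · rw [sub_zero, one_div_mul_eq_div, div_le_iff₀ (by positivity)]
    push_cast
    calc |(m : ℝ) - m'| ≤ L * dist (f m) (f m') := hlow m m'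
      _ ≤ dist (f m) (f m') * A := by rw [mul_comm]; gcongr
  · push_cast
    calc dist (f m) (f m') ≤ |(m : ℝ) - m'| * c := hup m m'
      _ ≤ A * |(m : ℝ) - m'| + 0 := by rw [add_zero, mul_comm]; gcongr

/-- If `g` is an isometry of a metric space `X`, and `W : X → ℤ` satisfies
`|W x - W y| ≤ L · d(x,y)` and `W (gᵐ x) = W x - m`, then every orbit map
`m ↦ gᵐ x₀` is a quasi-isometric embedding of `ℤ`; in particular
`d(x₀, gᵐ x₀) ≥ |m| / L`. -/
theorem stmt_2 {X : Type*} [MetricSpace X] (g : Equiv.Perm X) (hg : Isometry g)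
    (L : ℝ) (hL : 0 < L) (W : X → ℤ)
    (hLip : ∀ x y : X, (|W x - W y| : ℝ) ≤ L * dist x y)
    (hW : ∀ (x : X) (m : ℤ), W ((g ^ m) x) = W x - m)
    (x₀ : X) :
    (∃ A B : ℝ, 1 ≤ A ∧ 0 ≤ B ∧ ∀ m m' : ℤ,
      (1 / A) * (|m - m'| : ℤ) - B ≤ dist ((g ^ m) x₀) ((g ^ m') x₀) ∧
      dist ((g ^ m) x₀) ((g ^ m') x₀) ≤ A * (|m - m'| : ℤ) + B) ∧
    ∀ m : ℤ, (|m| : ℝ) / L ≤ dist x₀ ((g ^ m) x₀) := by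
  have hlow := Equiv.Perm.abs_sub_le_mul_dist_zpow_apply hLip hW x₀
  refine ⟨exists_quasiIsometric_of_linear_bounds (fun m => (g ^ m) x₀) hlow
    (Equiv.Perm.dist_zpow_apply_le hg x₀), fun m => ?_⟩
  rw [div_le_iff₀ hL, mul_comm]
  simpa using hlow 0 m
end

section
/- The Farey graph is connected: for any two reduced fractions p/q and r/s (with q, s > 0 and gcd(p,q) = gcd(r,s) = 1, and allowing the vertex infinity = 1/0), there is a finite path of vertices starting at p/q and ending at r/s such that consecutive vertices a/b and c/d satisfy |ad - bc| = 1. -/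
/-!
Every vertex `p/q` with `q > 0` is joined to `∞ = 1/0` by a path along which the denominators
strictly decrease: a Bézout relation `p b - q a = 1` can be chosen with `0 < b < q` (for `q > 1`),
and `a/b` is then a neighbour of `p/q`, while `p/1` is a neighbour of `1/0`. Any two vertices are
therefore connected through `∞`.
-/

open Relation

namespace Farey

def IsVertex (v : ℤ × ℤ) : Prop := IsCoprime v.1 v.2 ∧ 0 ≤ v.2

def Adj (x y : ℤ × ℤ) : Prop := IsVertex x ∧ IsVertex y ∧ |x.1 * y.2 - x.2 * y.1| = 1

theorem Adj.symm {x y : ℤ × ℤ} (h : Adj x y) : Adj y x := by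
  obtain ⟨hx, hy, hdet⟩ := h
  refine ⟨hy, hx, ?_⟩
  rw [← abs_neg, ← hdet]
  ring_nf

theorem exists_det_eq_one_of_lt {p q : ℤ} (hq : 1 < q) (hpq : IsCoprime p q) :
    ∃ a b : ℤ, 0 < b ∧ b < q ∧ p * b - q * a = 1 := by
  obtain ⟨u, v, huv⟩ := hpq
  have hdet : p * (u % q) - q * (-v - p * (u / q)) = 1 := by
    rw [Int.emod_def, ← huv]; ring
  refine ⟨_, u % q, ?_, Int.emod_lt_of_pos u (by omega), hdet⟩
  refine (Int.emod_nonneg u (by omega)).lt_of_ne fun h0 => ?_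
  have : q ∣ 1 := ⟨-(-v - p * (u / q)), by rw [← hdet, ← h0]; ring⟩
  exact absurd (Int.le_of_dvd one_pos this) (by omega)

theorem reflTransGen_adj_infty {p q : ℤ} (hq : 0 < q) (hpq : IsCoprime p q) :
    ReflTransGen Adj (p, q) (1, 0) := by
  have hv : IsVertex (p, q) := ⟨hpq, hq.le⟩
  have hinfty : IsVertex (1, 0) := ⟨isCoprime_one_left, le_rfl⟩
  obtain rfl | hq1 := (show 1 ≤ q by omega).eq_or_lt
  · exact .single ⟨hv, hinfty, by simp⟩
  · obtain ⟨a, b, hb, hbq, hdet⟩ := exists_det_eq_one_of_lt hq1 hpq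
    have hab : IsCoprime a b := ⟨-q, p, by linarith⟩
    exact .head ⟨hv, ⟨hab, hb.le⟩, by simp [hdet]⟩ (reflTransGen_adj_infty hb hab)
termination_by q.toNat
decreasing_by omega

theorem reflTransGen_adj {p q r s : ℤ} (hq : 0 < q) (hs : 0 < s)
    (hpq : IsCoprime p q) (hrs : IsCoprime r s) : ReflTransGen Adj (p, q) (r, s) :=
  have hback : ReflTransGen Adj (1, 0) (r, s) := reflTransGen_swap.mp <|
    ReflTransGen.mono (fun _ _ h => h.symm) _ _ (reflTransGen_adj_infty hs hrs)
  (reflTransGen_adj_infty hq hpq).trans hback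

end Farey

/-- The Farey graph is connected: for any two reduced fractions `p/q` and `r/s`
(with `q, s > 0`, allowing the vertex `∞ = 1/0` along the way), there is a
finite path of reduced fractions from `p/q` to `r/s` in which consecutive
vertices `a/b`, `c/d` satisfy `|a·d - b·c| = 1`. -/
theorem stmt_10 (p q r s : ℤ) (hq : 0 < q) (hs : 0 < s)
    (hpq : IsCoprime p q) (hrs : IsCoprime r s) :
    ∃ L : List (ℤ × ℤ), L ≠ [] ∧
      L.head? = some (p, q) ∧ L.getLast? = some (r, s) ∧
      (∀ v ∈ L, IsCoprime v.1 v.2 ∧ 0 ≤ v.2) ∧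
      List.Chain' (fun x y => |x.1 * y.2 - x.2 * y.1| = 1) L := by
  obtain ⟨l, hchain, hlast⟩ :=
    List.exists_isChain_cons_of_relationReflTransGen (Farey.reflTransGen_adj hq hs hpq hrs)
  refine ⟨(p, q) :: l, List.cons_ne_nil _ _, rfl, ?_, ?_, hchain.imp fun _ _ h => h.2.2⟩
  · rw [List.getLast?_eq_some_getLast (List.cons_ne_nil _ _), hlast]
  · exact hchain.induction Farey.IsVertex _ (fun _ _ h _ => h.2.1) fun _ => ⟨hpq, hq.le⟩
end
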